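/- Set B = −D⁻¹ L̃ and c = D⁻¹ r. Then L is invertible, and every chaotic relaxation for (B, c) (for any initial vector x⁰, any admissible shift functions and any admissible update function) converges to the solution L⁻¹ r of the system L x = r. -/

import Mathlib

open Filter Topology

/-- The `(i,j)`-th `b × b` block of a matrix indexed by `Fin N × Fin b`. -/
def blockOf {N b : ℕ} (M : Matrix (Fin N × Fin b) (Fin N × Fin b) ℝ) (i j : Fin N) :
    Matrix (Fin b) (Fin b) ℝ :=
  Matrix.of fun k l => M (i, k) (j, l)

/-- The block diagonal part `D` of a matrix (blocks of size `b × b`). -/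
def blockDiagPart {N b : ℕ} (M : Matrix (Fin N × Fin b) (Fin N × Fin b) ℝ) :
    Matrix (Fin N × Fin b) (Fin N × Fin b) ℝ :=
  Matrix.of fun p q => if p.1 = q.1 then M p q else 0

/-- The strictly lower block triangular part `L̃` of a matrix (blocks of size `b × b`). -/
def strictBlockLowerPart {N b : ℕ} (M : Matrix (Fin N × Fin b) (Fin N × Fin b) ℝ) :
    Matrix (Fin N × Fin b) (Fin N × Fin b) ℝ :=
  Matrix.of fun p q => if q.1 < p.1 then M p q else 0

/-- A chaotic relaxation for the pair `(B, c)` over an arbitrary finite index type. -/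
def IsChaoticRelaxation {ι : Type} [Fintype ι] (B : Matrix ι ι ℝ) (c : ι → ℝ)
    (x : ℕ → ι → ℝ) (s : ι → ℕ → ℕ) (u : ℕ → ι) : Prop :=
  (∀ j : ℕ, 1 ≤ j → ∀ i : ι,
      (i ≠ u j → x (j + 1) i = x j i) ∧
      (i = u j → x (j + 1) i = (∑ α : ι, B i α * x (j - s α j) α) + c i)) ∧
  (∃ shat : ℕ, ∀ (α : ι) (j : ℕ), 1 ≤ j → s α j ≤ min (j - 1) shat) ∧
  (∀ (i : ι) (j : ℕ), 1 ≤ j → ∃ l : ℕ, j < l ∧ u l = i)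

/-! The iteration matrix `B = -D⁻¹ L̃` is strictly lower block triangular and `L⁻¹ r` is a fixed
point of `x ↦ B x + c`. By well-founded induction on the block index, every component is
eventually equal to its fixed-point value: once all earlier blocks have settled, the bounded
delays make every value read from them final, and by fairness the component is updated once
more, after which it never changes again. Invertibility of `L` and `D` comes from the
determinant of a block triangular matrix being the product of those of its diagonal blocks. -/

open Matrix

namespace IsChaoticRelaxation

variable {ι : Type} [Fintype ι] {B : Matrix ι ι ℝ} {c : ι → ℝ} {x : ℕ → ι → ℝ}
  {s : ι → ℕ → ℕ} {u : ℕ → ι}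

theorem apply_succ_of_ne (hx : IsChaoticRelaxation B c x s u) {j : ℕ} (hj : 1 ≤ j) {i : ι}
    (hi : i ≠ u j) : x (j + 1) i = x j i :=
  (hx.1 j hj i).1 hi

theorem apply_succ_self (hx : IsChaoticRelaxation B c x s u) {j : ℕ} (hj : 1 ≤ j) :
    x (j + 1) (u j) = (∑ α, B (u j) α * x (j - s α j) α) + c (u j) :=
  (hx.1 j hj (u j)).2 rfl

theorem tendsto_sub_shift (hx : IsChaoticRelaxation B c x s u) (α : ι) :
    Tendsto (fun j => j - s α j) atTop atTop := by
  obtain ⟨shat, hshat⟩ := hx.2.1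
  refine tendsto_atTop_mono' atTop ?_ (tendsto_sub_atTop_nat shat)
  filter_upwards [eventually_ge_atTop 1] with j hj
  have := hshat α j hj
  omega

theorem eventually_apply_eq_of_eventually_update (hx : IsChaoticRelaxation B c x s u) {i : ι}
    {v : ℝ} (h : ∀ᶠ j in atTop, u j = i → x (j + 1) i = v) :
    ∀ᶠ j in atTop, x j i = v := by
  obtain ⟨T, hT⟩ := eventually_atTop.1 h
  obtain ⟨l, hTl, hl⟩ := hx.2.2 i (T + 1) le_add_self
  refine eventually_atTop.2 ⟨l + 1, fun j hj => ?_⟩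
  induction j, hj using Nat.le_induction with
  | base => exact hT l (by omega) hl
  | succ j hj ih =>
    by_cases hu : u j = i
    · exact hT j (by omega) hu
    · rw [hx.apply_succ_of_ne (by omega) (Ne.symm hu), ih]

theorem tendsto_of_rank_lt {α : Type*} [Preorder α] [WellFoundedLT α] (rank : ι → α)
    (hx : IsChaoticRelaxation B c x s u) (hB : ∀ i k, B i k ≠ 0 → rank k < rank i)
    {xs : ι → ℝ} (hxs : B *ᵥ xs + c = xs) :
    Tendsto x atTop (𝓝 xs) := by
  suffices h : ∀ i, ∀ᶠ j in atTop, x j i = xs i from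
    tendsto_nhds_of_eventually_eq ((eventually_all.2 h).mono fun _ => funext)
  intro i
  induction i using (InvImage.wf rank wellFounded_lt).induction with
  | _ i ih =>
  have hreads : ∀ᶠ j in atTop, ∀ k, B i k * x (j - s k j) k = B i k * xs k := by
    refine eventually_all.2 fun k => ?_
    by_cases hk : B i k = 0
    · simp [hk]
    · filter_upwards [hx.tendsto_sub_shift k |>.eventually (ih k (hB i k hk))] with j hj
      rw [hj]
  refine hx.eventually_apply_eq_of_eventually_update ?_
  filter_upwards [hreads, eventually_ge_atTop 1] with j hj hj1 hu
  subst hu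
  rw [hx.apply_succ_self hj1, Finset.sum_congr rfl fun k _ => hj k, ← congrFun hxs (u j)]
  rfl

end IsChaoticRelaxation

theorem Matrix.neg_inv_mul_mulVec_add_inv_mulVec {n K : Type*} [Fintype n] [DecidableEq n]
    [Field K] {D E : Matrix n n K} (hD : IsUnit D) (hDE : IsUnit (D + E)) (r : n → K) :
    (-(D⁻¹ * E)) *ᵥ ((D + E)⁻¹ *ᵥ r) + D⁻¹ *ᵥ r = (D + E)⁻¹ *ᵥ r := by
  set y := (D + E)⁻¹ *ᵥ r
  have hy : D *ᵥ y + E *ᵥ y = r := by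
    rw [← add_mulVec, mulVec_mulVec, mul_nonsing_inv _ ((isUnit_iff_isUnit_det _).1 hDE),
      one_mulVec]
  clear_value y
  subst hy
  rw [mulVec_add, mulVec_mulVec, nonsing_inv_mul _ ((isUnit_iff_isUnit_det _).1 hD),
    one_mulVec, neg_mulVec, mulVec_mulVec]
  abel

section Blocks

open OrderDual

variable {N b : ℕ}

theorem det_toSquareBlock_toDual_fst (M : Matrix (Fin N × Fin b) (Fin N × Fin b) ℝ)
    (i : Fin N) :
    (M.toSquareBlock (toDual ∘ Prod.fst) (toDual i)).det = (blockOf M i i).det := by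
  let e : Fin b ≃ {p : Fin N × Fin b // toDual p.1 = toDual i} :=
    { toFun := fun k => ⟨(i, k), rfl⟩
      invFun := fun p => p.1.2
      left_inv := fun _ => rfl
      right_inv := fun p => Subtype.ext (Prod.ext (toDual.injective p.2).symm rfl) }
  rw [← det_submatrix_equiv_self e]
  rfl

theorem Matrix.BlockTriangular.isUnit_of_isUnit_blockOf
    {M : Matrix (Fin N × Fin b) (Fin N × Fin b) ℝ} (hM : M.BlockTriangular (toDual ∘ Prod.fst)) (hd : ∀ i, IsUnit (blockOf M i i)) :
    IsUnit M := by
  rw [isUnit_iff_isUnit_det, hM.det_fintype]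
  refine IsUnit.prod_univ_iff.2 fun i => ?_
  obtain ⟨i, rfl⟩ := toDual.surjective i
  rw [det_toSquareBlock_toDual_fst]
  exact (isUnit_iff_isUnit_det _).1 (hd _)

theorem blockTriangular_toDual_fst {L : Matrix (Fin N × Fin b) (Fin N × Fin b) ℝ}
    (hlow : ∀ p q : Fin N × Fin b, p.1 < q.1 → L p q = 0) :
    L.BlockTriangular (toDual ∘ Prod.fst) :=
  fun p q h => hlow p q (toDual_lt_toDual.1 h)

theorem blockTriangular_blockDiagPart {α : Type*} [Preorder α] (f : Fin N → α)
    (M : Matrix (Fin N × Fin b) (Fin N × Fin b) ℝ) :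
    (blockDiagPart M).BlockTriangular (f ∘ Prod.fst) := fun p q h =>
  if_neg fun hpq => h.ne (by simp [hpq])

theorem blockOf_blockDiagPart (M : Matrix (Fin N × Fin b) (Fin N × Fin b) ℝ) (i : Fin N) :
    blockOf (blockDiagPart M) i i = blockOf M i i := by
  ext k l
  simp [blockOf, blockDiagPart]

theorem isUnit_blockDiagPart {M : Matrix (Fin N × Fin b) (Fin N × Fin b) ℝ}
    (hd : ∀ i, IsUnit (blockOf M i i)) : IsUnit (blockDiagPart M) :=
  (blockTriangular_blockDiagPart _ M).isUnit_of_isUnit_blockOf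
    fun i => blockOf_blockDiagPart M i ▸ hd i

theorem blockDiagPart_inv_apply_of_ne {M : Matrix (Fin N × Fin b) (Fin N × Fin b) ℝ}
    (hd : ∀ i, IsUnit (blockOf M i i)) {p q : Fin N × Fin b} (hpq : p.1 ≠ q.1) :
    (blockDiagPart M)⁻¹ p q = 0 := by
  let := (isUnit_blockDiagPart hd).invertible
  rcases hpq.lt_or_gt with h | h
  · exact blockTriangular_inv_of_blockTriangular (blockTriangular_blockDiagPart toDual M)
      (toDual_lt_toDual.2 h)
  · exact blockTriangular_inv_of_blockTriangular (blockTriangular_blockDiagPart id M) h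

theorem lt_of_blockDiagPart_inv_mul_strictBlockLowerPart_apply_ne_zero
    {M : Matrix (Fin N × Fin b) (Fin N × Fin b) ℝ} (hd : ∀ i, IsUnit (blockOf M i i))
    {p q : Fin N × Fin b} (h : ((blockDiagPart M)⁻¹ * strictBlockLowerPart M) p q ≠ 0) :
    q.1 < p.1 := by
  rw [mul_apply] at h
  obtain ⟨t, -, ht⟩ := Finset.exists_ne_zero_of_sum_ne_zero h
  have hpt : p.1 = t.1 := by_contra fun hpt => ht <| by
    rw [blockDiagPart_inv_apply_of_ne hd hpt, zero_mul]
  by_contra hqt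
  exact ht (by simp [strictBlockLowerPart, hpt ▸ hqt])

theorem blockDiagPart_add_strictBlockLowerPart {L : Matrix (Fin N × Fin b) (Fin N × Fin b) ℝ}
    (hlow : ∀ p q : Fin N × Fin b, p.1 < q.1 → L p q = 0) :
    blockDiagPart L + strictBlockLowerPart L = L := by
  ext p q
  simp only [Matrix.add_apply, blockDiagPart, strictBlockLowerPart, of_apply]
  rcases lt_trichotomy p.1 q.1 with h | h | h
  · simp [h.ne, h.not_gt, hlow p q h]
  · simp [h]
  · simp [h.ne', h]

end Blocks

theorem chaotic_relaxation_block_triangular_converges_general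
    {N b : ℕ}
    (L : Matrix (Fin N × Fin b) (Fin N × Fin b) ℝ)
    (hlow : ∀ p q : Fin N × Fin b, p.1 < q.1 → L p q = 0)
    (hdiag : ∀ i : Fin N, IsUnit (blockOf L i i))
    (r : (Fin N × Fin b) → ℝ) :
    IsUnit L ∧
    ∀ (x : ℕ → (Fin N × Fin b) → ℝ) (s : (Fin N × Fin b) → ℕ → ℕ)
      (u : ℕ → Fin N × Fin b),
      IsChaoticRelaxation (-((blockDiagPart L)⁻¹ * strictBlockLowerPart L))
        ((blockDiagPart L)⁻¹.mulVec r) x s u →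
      Tendsto x atTop (𝓝 (L⁻¹.mulVec r)) := by
  have hsplit := blockDiagPart_add_strictBlockLowerPart hlow
  have hL : IsUnit L := (blockTriangular_toDual_fst hlow).isUnit_of_isUnit_blockOf hdiag
  refine ⟨hL, fun x s u hx => hx.tendsto_of_rank_lt Prod.fst (fun p q hpq => ?_) ?_⟩
  · exact lt_of_blockDiagPart_inv_mul_strictBlockLowerPart_apply_ne_zero hdiag (neg_ne_zero.1 hpq)
  · have hfix := neg_inv_mul_mulVec_add_inv_mulVec (isUnit_blockDiagPart hdiag) (hsplit ▸ hL) r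
    rwa [hsplit] at hfix

/-- With `B = -D⁻¹ L̃` and `c = D⁻¹ r`, the lower block triangular matrix `L` is
invertible and every chaotic relaxation for `(B, c)` converges to `L⁻¹ r`. -/
theorem chaotic_relaxation_block_triangular_converges
    {N b : ℕ} (hb : 1 ≤ b) (hN : 1 ≤ N)
    (L : Matrix (Fin N × Fin b) (Fin N × Fin b) ℝ)
    (hlow : ∀ p q : Fin N × Fin b, p.1 < q.1 → L p q = 0)
    (hdiag : ∀ i : Fin N, IsUnit (blockOf L i i))
    (r : (Fin N × Fin b) → ℝ) :
    IsUnit L ∧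
    ∀ (x : ℕ → (Fin N × Fin b) → ℝ) (s : (Fin N × Fin b) → ℕ → ℕ)
      (u : ℕ → Fin N × Fin b),
      IsChaoticRelaxation (-((blockDiagPart L)⁻¹ * strictBlockLowerPart L))
        ((blockDiagPart L)⁻¹.mulVec r) x s u →
      Tendsto x atTop (𝓝 (L⁻¹.mulVec r)) :=
  chaotic_relaxation_block_triangular_converges_general L hlow hdiag r
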